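/- In the game constructed from an EXACT COVER instance (with s column players, 3s+2 row strategies and w+2 column strategies), there exists a transformation path of total cost 0 from the profile (r^1, c^1, …, c^1) (all players play their first strategy) to the profile (r^{3s+2}, c^{w+2}, …, c^{w+2}) (all players play their last strategy) if and only if there exist s indices i₁, …, i_s ∈ {1,…,w} such that X_{i₁} ∪ X_{i₂} ∪ ⋯ ∪ X_{i_s} = {1,…,3s}. -/

import Mathlib

open Finset

/-- Reward needed to incentivize the row player to play `i'` when the columns play `𝒞`. -/
noncomputable def Trow {m n k : ℕ} [NeZero m] (R : Fin m → Fin n → ℝ)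
    (𝒞 : Fin k → Fin n) (i' : Fin m) : ℝ :=
  (univ.sup' univ_nonempty fun i => ∑ j, R i (𝒞 j)) - ∑ j, R i' (𝒞 j)

/-- Reward needed to incentivize the column players to play `𝒞'` when the row plays `i`. -/
noncomputable def Tcol {m n k : ℕ} [NeZero n] (C : Fin m → Fin n → ℝ)
    (i : Fin m) (𝒞' : Fin k → Fin n) : ℝ :=
  k * (univ.sup' univ_nonempty fun q => C i q) - ∑ j, C i (𝒞' j)

/-- Total cost of the transformation path `P 0, P 1, …, P L`. -/
noncomputable def pathCost {m n k : ℕ} [NeZero m] [NeZero n] (R C : Fin m → Fin n → ℝ)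
    (P : ℕ → Fin m × (Fin k → Fin n)) (L : ℕ) : ℝ :=
  ∑ t ∈ Finset.range L, (Tcol C (P t).1 (P (t+1)).2 + Trow R (P t).2 (P (t+1)).1)

/-- The column players' payoff matrix of the game constructed from an EXACT COVER instance
(indices are 0-based: 0-based entry `(i,j)` is 1-based entry `(i+1,j+1)`). -/
noncomputable def ECcol (s w : ℕ) : Fin (3*s+2) → Fin (w+2) → ℝ :=
  fun i j => if (i.val ≤ 3*s ∧ j.val ≤ w) ∨ (i.val = 3*s+1 ∧ j.val = w+1) then 1 else 0

/-- The row player's payoff matrix of the game constructed from an EXACT COVER instance with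
subsets `X 1, …, X w ⊆ {1,…,3s}`; column `j` (for `1 ≤ j ≤ w`, 0-based) carries the
characteristic vector of `X j` (indices are 0-based). -/
noncomputable def ECrow (s w : ℕ) (X : ℕ → Finset ℕ) : Fin (3*s+2) → Fin (w+2) → ℝ :=
  fun i j =>
    if i.val = 0 then (if j.val = w+1 then -1 else 0)
    else if i.val = 3*s+1 then
      (if j.val = 0 then -(s : ℝ) else if j.val = w+1 then 1 else 1/(s : ℝ))
    else
      if j.val = 0 ∨ j.val = w+1 then 0
      else if i.val ∈ X j.val then 1 else 0

/-!
A zero-cost path consists of best responses of the row player that also give every column player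
its maximal payoff `1`. Hence, until the row player first reaches the last row, the columns stay
among the first `w + 1`, and reaching the last row means it is a best response to such a column
profile `𝒞`. Row `0` earns `0` against `𝒞`, whereas a column `0` in `𝒞` makes the last row earn
less; so `𝒞` picks sets `X j`, the last row earns `s • (1 / s) = 1`, and the element rows force
every element into at most one picked set. As `s` three-element subsets of `{1, …, 3s}` have
total multiplicity `3s`, this says exactly that they cover `{1, …, 3s}`. Conversely, an exact cover
`𝒞` gives the path `(r¹, c¹) → (r¹, 𝒞) → (r^{3s+2}, 𝒞) → (r^{3s+2}, c^{w+2})`.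
-/

theorem Finset.biUnion_eq_iff_card_filter_mem_le_one {ι α : Type*} [Fintype ι] [DecidableEq α]
    {A : ι → Finset α} {U : Finset α} (hsub : ∀ i, A i ⊆ U) (hcard : ∑ i, #(A i) = #U) :
    univ.biUnion A = U ↔ ∀ a ∈ U, #{i | a ∈ A i} ≤ 1 := by
  have hcount : ∑ a ∈ U, #{i | a ∈ A i} = ∑ _a ∈ U, 1 := by
    simp_rw [card_filter, sum_const, smul_eq_mul, mul_one, ← hcard]
    rw [sum_comm]
    refine sum_congr rfl fun i _ => ?_
    rw [← card_filter, filter_mem_eq_inter, inter_eq_right.2 (hsub i)]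
  have hcover : univ.biUnion A = U ↔ ∀ a ∈ U, 1 ≤ #{i | a ∈ A i} := by
    simp only [Nat.one_le_iff_ne_zero, ← Nat.pos_iff_ne_zero, card_pos, filter_nonempty_iff,
      mem_univ, true_and]
    rw [← (biUnion_subset.2 fun i _ => hsub i).ge_iff_eq, subset_iff]
    simp only [mem_biUnion, mem_univ, true_and]
  rw [hcover]
  exact ⟨fun h a ha => ((sum_eq_sum_iff_of_le h).1 hcount.symm a ha).ge,
    fun h a ha => ((sum_eq_sum_iff_of_le h).1 hcount a ha).ge⟩

section Transformation

variable {m n k : ℕ}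

lemma Trow_nonneg [NeZero m] (R : Fin m → Fin n → ℝ) (𝒞 : Fin k → Fin n) (i' : Fin m) :
    0 ≤ Trow R 𝒞 i' :=
  sub_nonneg.2 (le_sup' (fun i => ∑ j, R i (𝒞 j)) (mem_univ i'))

lemma Trow_eq_zero_iff [NeZero m] {R : Fin m → Fin n → ℝ} {𝒞 : Fin k → Fin n} {i' : Fin m} :
    Trow R 𝒞 i' = 0 ↔ ∀ i, ∑ j, R i (𝒞 j) ≤ ∑ j, R i' (𝒞 j) := by
  rw [Trow, sub_eq_zero]
  exact ⟨fun h i => h ▸ le_sup' (fun i => ∑ j, R i (𝒞 j)) (mem_univ i),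
    fun h => le_antisymm (sup'_le _ _ fun i _ => h i)
      (le_sup' (fun i => ∑ j, R i (𝒞 j)) (mem_univ i'))⟩

lemma Tcol_eq_sum [NeZero n] (C : Fin m → Fin n → ℝ) (i : Fin m) (𝒞' : Fin k → Fin n) :
    Tcol C i 𝒞' = ∑ j, ((univ.sup' univ_nonempty fun q => C i q) - C i (𝒞' j)) := by
  simp [Tcol, sum_sub_distrib]

lemma Tcol_nonneg [NeZero n] (C : Fin m → Fin n → ℝ) (i : Fin m) (𝒞' : Fin k → Fin n) :
    0 ≤ Tcol C i 𝒞' := by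
  rw [Tcol_eq_sum]
  exact sum_nonneg fun j _ => sub_nonneg.2 (le_sup' _ (mem_univ _))

lemma Tcol_eq_zero_iff [NeZero n] {C : Fin m → Fin n → ℝ} {i : Fin m} {𝒞' : Fin k → Fin n} :
    Tcol C i 𝒞' = 0 ↔ ∀ j, C i (𝒞' j) = univ.sup' univ_nonempty fun q => C i q := by
  rw [Tcol_eq_sum, sum_eq_zero_iff_of_nonneg fun j _ => sub_nonneg.2 (le_sup' _ (mem_univ _))]
  simp only [mem_univ, true_implies, sub_eq_zero, eq_comm]

lemma pathCost_eq_zero_iff [NeZero m] [NeZero n] {R C : Fin m → Fin n → ℝ}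
    {P : ℕ → Fin m × (Fin k → Fin n)} {L : ℕ} :
    pathCost R C P L = 0 ↔
      ∀ t < L, Tcol C (P t).1 (P (t+1)).2 = 0 ∧ Trow R (P t).2 (P (t+1)).1 = 0 := by
  rw [pathCost, sum_eq_zero_iff_of_nonneg fun t _ =>
    add_nonneg (Tcol_nonneg _ _ _) (Trow_nonneg _ _ _)]
  simp only [mem_range]
  exact forall₂_congr fun t _ =>
    add_eq_zero_iff_of_nonneg (Tcol_nonneg _ _ _) (Trow_nonneg _ _ _)

end Transformation

section ExactCoverGame

variable {s w : ℕ} {X : ℕ → Finset ℕ} {𝒞 : Fin s → Fin (w+2)}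

lemma ECcol_le_one (i : Fin (3*s+2)) (j : Fin (w+2)) : ECcol s w i j ≤ 1 := by
  unfold ECcol; split_ifs <;> norm_num

lemma ECcol_eq_one_iff_of_ne_last {i : Fin (3*s+2)} (hi : i ≠ Fin.last _) {j : Fin (w+2)} :
    ECcol s w i j = 1 ↔ j.val ≤ w := by
  have := Fin.val_lt_last hi
  unfold ECcol
  split_ifs <;> simp <;> omega

lemma ECcol_last_last : ECcol s w (Fin.last _) (Fin.last _) = 1 := by
  simp [ECcol]

lemma sup'_ECcol (i : Fin (3*s+2)) : (univ.sup' univ_nonempty fun q => ECcol s w i q) = 1 := by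
  refine le_antisymm (sup'_le _ _ fun q _ => ECcol_le_one i q) ?_
  by_cases hi : i = Fin.last _
  · subst hi
    exact ECcol_last_last.ge.trans (le_sup' _ (mem_univ _))
  · exact ((ECcol_eq_one_iff_of_ne_last hi (j := 0)).2 (Nat.zero_le w)).ge.trans
      (le_sup' _ (mem_univ _))

lemma Tcol_ECcol_eq_zero_iff {i : Fin (3*s+2)} {𝒞' : Fin k → Fin (w+2)} :
    Tcol (ECcol s w) i 𝒞' = 0 ↔ ∀ j, ECcol s w i (𝒞' j) = 1 := by
  rw [Tcol_eq_zero_iff, sup'_ECcol]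

lemma ECrow_zero_of_le {j : Fin (w+2)} (hj : j.val ≤ w) : ECrow s w X 0 j = 0 := by
  simp only [ECrow, Fin.val_zero, if_true]
  exact if_neg (by omega)

lemma ECrow_col_zero_nonpos (i : Fin (3*s+2)) : ECrow s w X i 0 ≤ 0 := by
  unfold ECrow
  split_ifs <;> simp_all

lemma ECrow_last_le {j : Fin (w+2)} (hj : j.val ≤ w) : ECrow s w X (Fin.last _) j ≤ 1 / s := by
  unfold ECrow
  rw [Fin.val_last, if_neg (by omega), if_pos rfl, if_neg (by omega : j.val ≠ w + 1)]
  split_ifs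
  · exact (neg_nonpos.2 s.cast_nonneg).trans (by positivity)
  · exact le_rfl

lemma ECrow_last_of_mem {j : Fin (w+2)} (hj : j.val ∈ Icc 1 w) :
    ECrow s w X (Fin.last _) j = 1 / s := by
  rw [mem_Icc] at hj
  unfold ECrow
  rw [Fin.val_last, if_neg (by omega), if_pos rfl, if_neg (by omega), if_neg (by omega)]

lemma ECrow_of_mem {i : Fin (3*s+2)} (hi : i.val ∈ Icc 1 (3*s)) {j : Fin (w+2)}
    (hj : j.val ∈ Icc 1 w) : ECrow s w X i j = if i.val ∈ X j.val then 1 else 0 := by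
  rw [mem_Icc] at hi hj
  unfold ECrow
  rw [if_neg (by omega), if_neg (by omega), if_neg (by omega)]

lemma sum_ECrow_zero (h𝒞 : ∀ j, (𝒞 j).val ≤ w) : ∑ j, ECrow s w X 0 (𝒞 j) = 0 :=
  sum_eq_zero fun j _ => ECrow_zero_of_le (h𝒞 j)

lemma sum_ECrow_last (hs : 1 ≤ s) (h𝒞 : ∀ j, (𝒞 j).val ∈ Icc 1 w) :
    ∑ j, ECrow s w X (Fin.last _) (𝒞 j) = 1 := by
  simp only [ECrow_last_of_mem (h𝒞 _), sum_const, card_univ, Fintype.card_fin, nsmul_eq_mul]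
  have : (s : ℝ) ≠ 0 := by positivity
  field_simp

lemma sum_ECrow_eq_card {i : Fin (3*s+2)} (hi : i.val ∈ Icc 1 (3*s))
    (h𝒞 : ∀ j, (𝒞 j).val ∈ Icc 1 w) :
    ∑ j, ECrow s w X i (𝒞 j) = #{j | i.val ∈ X (𝒞 j)} := by
  simp only [ECrow_of_mem hi (h𝒞 _), sum_boole]

lemma sum_ECrow_last_neg (h𝒞 : ∀ j, (𝒞 j).val ≤ w) {j₀ : Fin s} (hj₀ : (𝒞 j₀).val = 0) :
    ∑ j, ECrow s w X (Fin.last _) (𝒞 j) < 0 := by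
  have hs : (0 : ℝ) < s := by exact_mod_cast j₀.pos
  have hrest : ((univ.erase j₀).card : ℝ) * (1 / s) < 1 := by
    rw [mul_one_div, div_lt_one hs]
    exact_mod_cast (card_erase_lt_of_mem (mem_univ j₀)).trans_eq (card_fin s)
  have hfirst : ECrow s w X (Fin.last _) (𝒞 j₀) = -s := by
    simp [ECrow, hj₀]
  rw [← add_sum_erase _ _ (mem_univ j₀), hfirst]
  have := sum_le_card_nsmul (univ.erase j₀) (fun j => ECrow s w X (Fin.last _) (𝒞 j)) (1 / s)
    fun j _ => ECrow_last_le (h𝒞 j)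
  rw [nsmul_eq_mul] at this
  have hs1 : (1 : ℝ) ≤ s := by exact_mod_cast j₀.pos
  linarith

lemma Trow_ECrow_last_eq_zero_iff (hs : 1 ≤ s) (h𝒞 : ∀ j, (𝒞 j).val ≤ w) :
    Trow (ECrow s w X) 𝒞 (Fin.last _) = 0 ↔
      (∀ j, (𝒞 j).val ∈ Icc 1 w) ∧ ∀ a ∈ Icc 1 (3*s), #{j | a ∈ X (𝒞 j)} ≤ 1 := by
  rw [Trow_eq_zero_iff]
  constructor
  · intro hbest
    -- a column `0` would make the last row earn less than row `0`, which earns `0`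
    have hmid : ∀ j, (𝒞 j).val ∈ Icc 1 w := fun j =>
      mem_Icc.2 ⟨Nat.one_le_iff_ne_zero.2 fun hj => (sum_ECrow_last_neg h𝒞 hj).not_ge
        (sum_ECrow_zero h𝒞 ▸ hbest 0), h𝒞 j⟩
    refine ⟨hmid, fun a ha => ?_⟩
    have hrow : a < 3*s+2 := by rw [mem_Icc] at ha; omega
    have := hbest ⟨a, hrow⟩
    rwa [sum_ECrow_eq_card ha hmid, sum_ECrow_last hs hmid, Nat.cast_le_one] at this
  · rintro ⟨hmid, hcount⟩ i
    rw [sum_ECrow_last hs hmid]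
    obtain rfl | hi | rfl : i = 0 ∨ i.val ∈ Icc 1 (3*s) ∨ i = Fin.last _ := by
      simp only [Fin.ext_iff, Fin.val_zero, Fin.val_last, mem_Icc]
      omega
    · rw [sum_ECrow_zero h𝒞]
      exact zero_le_one
    · rw [sum_ECrow_eq_card hi hmid]
      exact_mod_cast hcount _ hi
    · rw [sum_ECrow_last hs hmid]

lemma exists_Trow_ECrow_last_eq_zero {P : ℕ → Fin (3*s+2) × (Fin s → Fin (w+2))} {L : ℕ}
    (hP0 : P 0 = (0, fun _ => 0)) (hPL : (P L).1 = Fin.last _)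
    (hzero : ∀ t < L, Tcol (ECcol s w) (P t).1 (P (t+1)).2 = 0 ∧
      Trow (ECrow s w X) (P t).2 (P (t+1)).1 = 0) :
    ∃ 𝒞 : Fin s → Fin (w+2), (∀ j, (𝒞 j).val ≤ w) ∧ Trow (ECrow s w X) 𝒞 (Fin.last _) = 0 := by
  have hreach : ∃ t, (P t).1 = Fin.last _ := ⟨L, hPL⟩
  -- `t + 1` is the first time the row player reaches the last row
  obtain ⟨t, ht⟩ : ∃ t, Nat.find hreach = t + 1 := Nat.exists_eq_succ_of_ne_zero fun h => by
    have h0 := Nat.find_spec hreach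
    rw [h, hP0] at h0
    simp [Fin.ext_iff] at h0
  have htL : t < L := by
    have := Nat.find_min' hreach hPL
    omega
  refine ⟨(P t).2, ?_, by simpa [← ht, Nat.find_spec hreach] using (hzero t htL).2⟩
  -- before `t + 1` the row is not the last one, so zero column cost keeps the columns in `0..w`
  cases t with
  | zero => simp [hP0]
  | succ u =>
    have hu : (P u).1 ≠ Fin.last _ := Nat.find_min hreach (by omega)
    exact fun j => (ECcol_eq_one_iff_of_ne_last hu).1
      (Tcol_ECcol_eq_zero_iff.1 (hzero u (by omega)).1 j)

lemma exists_pathCost_eq_zero_of_Trow_ECrow_last_eq_zero (h𝒞 : ∀ j, (𝒞 j).val ≤ w)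
    (hbest : Trow (ECrow s w X) 𝒞 (Fin.last _) = 0) :
    ∃ (L : ℕ) (P : ℕ → Fin (3*s+2) × (Fin s → Fin (w+2))),
      P 0 = (0, fun _ => 0) ∧ P L = (Fin.last _, fun _ => Fin.last _) ∧
        pathCost (ECrow s w X) (ECcol s w) P L = 0 := by
  have hstart : Trow (ECrow s w X) (fun _ => 0) 0 = 0 := Trow_eq_zero_iff.2 fun i => by
    rw [sum_ECrow_zero fun _ => Nat.zero_le w]
    exact sum_nonpos fun _ _ => ECrow_col_zero_nonpos i
  have hcols : Tcol (ECcol s w) 0 𝒞 = 0 := Tcol_ECcol_eq_zero_iff.2 fun j =>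
    (ECcol_eq_one_iff_of_ne_last (Fin.last_pos.ne)).2 (h𝒞 j)
  have hend : Tcol (ECcol s w) (Fin.last _) (fun (_ : Fin s) => Fin.last (w+1)) = 0 :=
    Tcol_ECcol_eq_zero_iff.2 fun _ => ECcol_last_last
  refine ⟨3, fun t => if t = 0 then (0, fun _ => 0) else if t = 1 then (0, 𝒞)
    else if t = 2 then (Fin.last _, 𝒞) else (Fin.last _, fun _ => Fin.last _), rfl, rfl,
    pathCost_eq_zero_iff.2 fun t ht => ?_⟩
  interval_cases t <;> simp [hstart, hcols, hbest, hend]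

end ExactCoverGame

/-- In the game constructed from an EXACT COVER instance (`s` column players, `3s+2` row
strategies, `w+2` column strategies), there is a transformation path of total cost `0` from
`(r^1, c^1, …, c^1)` to `(r^{3s+2}, c^{w+2}, …, c^{w+2})` iff there are `s` indices
`i₁, …, i_s ∈ {1,…,w}` with `X_{i₁} ∪ ⋯ ∪ X_{i_s} = {1,…,3s}`. -/
theorem exact_cover_iff_zero_cost_transformation_path
    (s w : ℕ) (hs : 1 ≤ s)
    (X : ℕ → Finset ℕ)
    (hXsub : ∀ t, 1 ≤ t → t ≤ w → X t ⊆ Finset.Icc 1 (3*s))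
    (hXcard : ∀ t, 1 ≤ t → t ≤ w → (X t).card = 3) :
    (∃ (L : ℕ) (P : ℕ → Fin (3*s+2) × (Fin s → Fin (w+2))),
        P 0 = (⟨0, by omega⟩, fun _ => ⟨0, by omega⟩) ∧
        P L = (⟨3*s+1, by omega⟩, fun _ => ⟨w+1, by omega⟩) ∧
        pathCost (ECrow s w X) (ECcol s w) P L = 0) ↔
      (∃ f : Fin s → ℕ, (∀ t, f t ∈ Finset.Icc 1 w) ∧
        Finset.univ.biUnion (fun t => X (f t)) = Finset.Icc 1 (3*s)) := by
  have hcover {f : Fin s → ℕ} (hf : ∀ t, f t ∈ Icc 1 w) :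
      univ.biUnion (fun t => X (f t)) = Icc 1 (3*s) ↔
        ∀ a ∈ Icc 1 (3*s), #{t | a ∈ X (f t)} ≤ 1 := by
    simp only [mem_Icc] at hf
    refine biUnion_eq_iff_card_filter_mem_le_one (fun t => hXsub _ (hf t).1 (hf t).2) ?_
    simp [hXcard _ (hf _).1 (hf _).2, mul_comm]
  constructor
  · rintro ⟨L, P, hP0, hPL, hcost⟩
    obtain ⟨𝒞, h𝒞, hbest⟩ :=
      exists_Trow_ECrow_last_eq_zero hP0 (congrArg Prod.fst hPL) (pathCost_eq_zero_iff.1 hcost)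
    obtain ⟨hmid, hcount⟩ := (Trow_ECrow_last_eq_zero_iff hs h𝒞).1 hbest
    exact ⟨fun t => 𝒞 t, hmid, (hcover hmid).2 hcount⟩
  · rintro ⟨f, hf, hcov⟩
    let 𝒞 : Fin s → Fin (w+2) := fun t => ⟨f t, by have := (mem_Icc.1 (hf t)).2; omega⟩
    have h𝒞 : ∀ t, (𝒞 t).val ≤ w := fun t => (mem_Icc.1 (hf t)).2
    exact exists_pathCost_eq_zero_of_Trow_ECrow_last_eq_zero h𝒞
      ((Trow_ECrow_last_eq_zero_iff hs h𝒞).2 ⟨hf, (hcover hf).1 hcov⟩)
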